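/- Let α ∈ [0,1), let f(α) = 20 if α ∈ [0,1/2], f(α) = 25 if α ∈ (1/2,5/7], and f(α) = 7/(1−α) + 3 if α ∈ (5/7,1). Let s ≥ 1 be an integer and set n = s + ⌊3s/2⌋ + 2. If n ≥ f(α), then the A_α-spectral radius of G = K_s ∨ ((⌊3s/2⌋+2)K₁) satisfies ρ_α(G) < n − 3. -/

import Mathlib

open Finset

/-- The join `G ∨g H` of two graphs: the disjoint union together with all edges
between the two parts. -/
def SimpleGraph.gjoin {α β : Type*} (G : SimpleGraph α) (H : SimpleGraph β) :
    SimpleGraph (α ⊕ β) where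
  Adj u v := match u, v with
    | Sum.inl u, Sum.inl v => G.Adj u v
    | Sum.inr u, Sum.inr v => H.Adj u v
    | _, _ => True
  symm := ⟨fun u v => match u, v with
    | Sum.inl u, Sum.inl v => G.adj_symm
    | Sum.inr u, Sum.inr v => H.adj_symm
    | Sum.inl _, Sum.inr _ | Sum.inr _, Sum.inl _ => fun _ => trivial⟩
  loopless := ⟨fun u => by cases u <;> simp⟩

infixl:60 " ∨g " => SimpleGraph.gjoin

/-- The `A_α`-matrix `α • D(G) + (1-α) • A(G)` of a graph `G`. -/
noncomputable def aAlphaMatrix {V : Type*} [Fintype V] [DecidableEq V]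
    (α : ℝ) (G : SimpleGraph V) : Matrix V V ℝ := by
  classical
  exact α • Matrix.diagonal (fun v => (G.degree v : ℝ)) + (1 - α) • G.adjMatrix ℝ

/-- The `A_α`-spectral radius `ρ_α(G)`: the largest eigenvalue of `A_α(G)`. -/
noncomputable def rhoAlpha {V : Type*} [Fintype V] [DecidableEq V]
    (α : ℝ) (G : SimpleGraph V) : ℝ :=
  sSup (spectrum ℝ (aAlphaMatrix α G))

/-- The signless Laplacian matrix `Q(G) = D(G) + A(G)`. -/
noncomputable def signlessLaplacian {V : Type*} [Fintype V] [DecidableEq V]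
    (G : SimpleGraph V) : Matrix V V ℝ := by
  classical
  exact Matrix.diagonal (fun v => (G.degree v : ℝ)) + G.adjMatrix ℝ

/-- `q(G)`: the largest eigenvalue of the signless Laplacian matrix of `G`. -/
noncomputable def qIndex {V : Type*} [Fintype V] [DecidableEq V]
    (G : SimpleGraph V) : ℝ :=
  sSup (spectrum ℝ (signlessLaplacian G))

/-- The number of edges (the size) of a graph. -/
noncomputable def edgeCount {V : Type*} [Fintype V] [DecidableEq V]
    (G : SimpleGraph V) : ℕ := by
  classical
  exact G.edgeFinset.card

/-- `i(G - S)`: the number of isolated vertices of the graph obtained from `G`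
by deleting the vertices of `S` together with all edges incident to `S`. -/
noncomputable def isolGminus {V : Type*} [Fintype V] [DecidableEq V]
    (G : SimpleGraph V) (S : Finset V) : ℕ := by
  classical
  exact (Finset.univ.filter (fun v => v ∉ S ∧ ∀ u, G.Adj v u → u ∈ S)).card

/-- `F(n)`: the edge bound from Theorem 1.1. -/
def Fbound (n : ℕ) : ℕ :=
  if n = 6 then 9 else if n = 8 then 18 else (n - 2).choose 2 + 2

/-- `f(α)`: the order bound from Theorem 1.2. -/
noncomputable def fAlpha (α : ℝ) : ℝ :=
  if α ≤ 1 / 2 then 20 else if α ≤ 5 / 7 then 25 else 7 / (1 - α) + 3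

/-! A Collatz–Wielandt bound: if a matrix `M ≥ 0` and a vector `x > 0` satisfy `M x ≤ B x`
entrywise, then every real eigenvalue `μ` of `M` has `|μ| ≤ B` (compare `|μ| |y i| ≤ B |y i|` at an
index maximising `|y i| / x i`). For `K_s ∨ m K₁` with `m = ⌊3s/2⌋ + 2` take `x = 2` on the clique
and `x = 1` on the independent set: the row ratios are
`α (s - 1 + m) + (1 - α) (s - 1 + m / 2)` and `(2 - α) s`, which stay below `n - 3` exactly when
`(1 - α) m > 4` and `(2 - α) s < n - 3`. Since `m ≈ 3n / 5`, both follow from `n ≥ f(α)`. -/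

namespace Matrix

variable {ι : Type*} [Fintype ι] {M : Matrix ι ι ℝ} {x : ι → ℝ} {B : ℝ}

theorem abs_le_of_mulVec_eq_smul (hM : ∀ i j, 0 ≤ M i j) (hx : ∀ i, 0 < x i)
    (hB : ∀ i, (M *ᵥ x) i ≤ B * x i) {μ : ℝ} {y : ι → ℝ} (hy : y ≠ 0)
    (hμ : M *ᵥ y = μ • y) : |μ| ≤ B := by
  obtain ⟨j₀, hj₀⟩ := Function.ne_iff.mp hy
  obtain ⟨i, -, hi⟩ := Finset.exists_max_image Finset.univ (fun j => |y j| / x j)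
    ⟨j₀, Finset.mem_univ j₀⟩
  set r := |y i| / x i
  have hy_le (j : ι) : |y j| ≤ r * x j := (div_le_iff₀ (hx j)).mp (hi j (Finset.mem_univ j))
  have hyi : |y i| = r * x i := (div_mul_cancel₀ _ (hx i).ne').symm
  have hr : 0 < r := (div_pos (abs_pos.2 hj₀) (hx j₀)).trans_le (hi j₀ (Finset.mem_univ j₀))
  have key : |μ| * |y i| ≤ B * |y i| :=
    calc |μ| * |y i| = |∑ j, M i j * y j| := by
          rw [← abs_mul, ← smul_eq_mul, ← Pi.smul_apply, ← hμ]; rfl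
      _ ≤ ∑ j, M i j * (r * x j) := by
          refine (Finset.abs_sum_le_sum_abs _ _).trans (Finset.sum_le_sum fun j _ => ?_)
          rw [abs_mul, abs_of_nonneg (hM i j)]
          exact mul_le_mul_of_nonneg_left (hy_le j) (hM i j)
      _ = r * (M *ᵥ x) i := by
          simp only [mulVec, dotProduct, Finset.mul_sum]
          exact Finset.sum_congr rfl fun j _ => by ring
      _ ≤ B * |y i| := by
          rw [hyi, mul_left_comm]; exact mul_le_mul_of_nonneg_left (hB i) hr.le
  exact le_of_mul_le_mul_right key (hyi ▸ mul_pos hr (hx i))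

theorem sSup_spectrum_le_of_mulVec_le [Nonempty ι] [DecidableEq ι] (hM : ∀ i j, 0 ≤ M i j)
    (hx : ∀ i, 0 < x i) (hB : ∀ i, (M *ᵥ x) i ≤ B * x i) : sSup (spectrum ℝ M) ≤ B := by
  have hB₀ : 0 ≤ B := by
    obtain ⟨i⟩ := ‹Nonempty ι›
    refine nonneg_of_mul_nonneg_left ((Finset.sum_nonneg fun j _ => ?_).trans (hB i)) (hx i)
    exact mul_nonneg (hM i j) (hx j).le
  refine Real.sSup_le (fun μ hμ => ?_) hB₀
  rw [← spectrum_toLin', ← Module.End.hasEigenvalue_iff_mem_spectrum] at hμ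
  obtain ⟨y, hy⟩ := hμ.exists_hasEigenvector
  exact (le_abs_self μ).trans (abs_le_of_mulVec_eq_smul hM hx hB hy.2 hy.apply_eq_smul)

end Matrix

section AAlphaMatrix

open Matrix

variable {V : Type*} [Fintype V] [DecidableEq V] (G : SimpleGraph V)

theorem aAlphaMatrix_nonneg {α : ℝ} (hα₀ : 0 ≤ α) (hα₁ : α ≤ 1) (i j : V) :
    0 ≤ aAlphaMatrix α G i j := by
  have : 0 ≤ 1 - α := sub_nonneg.2 hα₁
  simp only [aAlphaMatrix, Matrix.add_apply, Matrix.smul_apply, smul_eq_mul, diagonal_apply,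
    SimpleGraph.adjMatrix_apply]
  split_ifs <;> positivity

theorem aAlphaMatrix_mulVec_apply (α : ℝ) [DecidableRel G.Adj] (x : V → ℝ) (v : V) :
    (aAlphaMatrix α G *ᵥ x) v =
      α * G.degree v * x v + (1 - α) * ∑ u ∈ G.neighborFinset v, x u := by
  simp only [aAlphaMatrix, add_mulVec, smul_mulVec, Pi.add_apply, Pi.smul_apply, smul_eq_mul,
    mulVec_diagonal]
  rw [← G.adjMatrix_mulVec_apply, mul_assoc]
  -- `aAlphaMatrix` is built from the classical decidability instances
  congr!

end AAlphaMatrix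

namespace SimpleGraph

variable {V W : Type*} (G : SimpleGraph V) (H : SimpleGraph W)

@[simp] theorem gjoin_adj_inl_inl {v v' : V} : (G ∨g H).Adj (.inl v) (.inl v') ↔ G.Adj v v' :=
  Iff.rfl

@[simp] theorem gjoin_adj_inr_inr {w w' : W} : (G ∨g H).Adj (.inr w) (.inr w') ↔ H.Adj w w' :=
  Iff.rfl

@[simp] theorem gjoin_adj_inl_inr {v : V} {w : W} : (G ∨g H).Adj (.inl v) (.inr w) := trivial

@[simp] theorem gjoin_adj_inr_inl {v : V} {w : W} : (G ∨g H).Adj (.inr w) (.inl v) := trivial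

instance gjoin.decidableRel [DecidableRel G.Adj] [DecidableRel H.Adj] :
    DecidableRel (G ∨g H).Adj
  | .inl v, .inl v' => inferInstanceAs (Decidable (G.Adj v v'))
  | .inr w, .inr w' => inferInstanceAs (Decidable (H.Adj w w'))
  | .inl _, .inr _ | .inr _, .inl _ => isTrue trivial

variable [Fintype V] [Fintype W] [DecidableRel G.Adj] [DecidableRel H.Adj]

theorem gjoin_neighborFinset_inl (v : V) :
    (G ∨g H).neighborFinset (.inl v) = (G.neighborFinset v).disjSum Finset.univ := by
  ext (u | u) <;> simp

theorem gjoin_neighborFinset_inr (w : W) :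
    (G ∨g H).neighborFinset (.inr w) = Finset.univ.disjSum (H.neighborFinset w) := by
  ext (u | u) <;> simp

variable {G H} [DecidableEq V] [DecidableEq W] (α a b : ℝ)

open Matrix

theorem gjoin_aAlphaMatrix_mulVec_inl {r : ℕ} (hG : G.IsRegularOfDegree r) (v : V) :
    (aAlphaMatrix α (G ∨g H) *ᵥ Sum.elim (fun _ => a) (fun _ => b)) (.inl v)
      = α * (r + Fintype.card W) * a + (1 - α) * (r * a + Fintype.card W * b) := by
  rw [aAlphaMatrix_mulVec_apply, ← card_neighborFinset_eq_degree, gjoin_neighborFinset_inl,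
    Finset.card_disjSum, Finset.sum_disjSum]
  simp [hG.degree_eq]

theorem gjoin_aAlphaMatrix_mulVec_inr {t : ℕ} (hH : H.IsRegularOfDegree t) (w : W) :
    (aAlphaMatrix α (G ∨g H) *ᵥ Sum.elim (fun _ => a) (fun _ => b)) (.inr w)
      = α * (Fintype.card V + t) * b + (1 - α) * (Fintype.card V * a + t * b) := by
  rw [aAlphaMatrix_mulVec_apply, ← card_neighborFinset_eq_degree, gjoin_neighborFinset_inr,
    Finset.card_disjSum, Finset.sum_disjSum]
  simp [hH.degree_eq]

end SimpleGraph

theorem four_lt_mul_and_lt_of_fAlpha_le {α s m : ℝ} (hα₀ : 0 ≤ α) (hα₁ : α < 1)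
    (hm₁ : 3 * s + 3 ≤ 2 * m) (hm₂ : 2 * m ≤ 3 * s + 4) (hf : fAlpha α ≤ s + m) :
    4 < (1 - α) * m ∧ (2 - α) * s < s + m - 3 := by
  unfold fAlpha at hf
  split_ifs at hf
  · exact ⟨by nlinarith, by nlinarith⟩
  · exact ⟨by nlinarith, by nlinarith⟩
  · have hf' : 7 ≤ (1 - α) * (s + m - 3) := by
      rw [← div_le_iff₀' (by linarith)]; linarith
    have hlarge : 27 < s + m := by nlinarith
    exact ⟨by nlinarith, by nlinarith⟩

open Matrix SimpleGraph

theorem rhoAlpha_case22_lt (α : ℝ) (hα0 : 0 ≤ α) (hα1 : α < 1)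
    (s n : ℕ) (hs : 1 ≤ s) (hn : n = s + 3 * s / 2 + 2) (hfn : fAlpha α ≤ (n : ℝ)) :
    rhoAlpha α ((⊤ : SimpleGraph (Fin s)) ∨g (⊥ : SimpleGraph (Fin (3 * s / 2 + 2))))
      < (n : ℝ) - 3 := by
  set m := 3 * s / 2 + 2
  have hm₁ : (3 * s + 3 : ℝ) ≤ 2 * m := by exact_mod_cast (by omega : 3 * s + 3 ≤ 2 * m)
  have hm₂ : (2 * m : ℝ) ≤ 3 * s + 4 := by exact_mod_cast (by omega : 2 * m ≤ 3 * s + 4)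
  have hnsm : (n : ℝ) = s + m := by exact_mod_cast (by omega : n = s + m)
  rw [hnsm] at hfn ⊢
  obtain ⟨hclique, hindep⟩ := four_lt_mul_and_lt_of_fAlpha_le hα0 hα1 hm₁ hm₂ hfn
  set b₁ : ℝ := α * (s - 1 + m) + (1 - α) * (s - 1 + m / 2) with hb₁
  set b₂ : ℝ := (2 - α) * s
  have hrow : ∀ i, (aAlphaMatrix α ((⊤ : SimpleGraph (Fin s)) ∨g (⊥ : SimpleGraph (Fin m))) *ᵥ
      Sum.elim (fun _ => 2) (fun _ => 1)) i ≤ max b₁ b₂ * Sum.elim (fun _ => 2) (fun _ => 1) i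
  · rintro (v | w)
    · rw [gjoin_aAlphaMatrix_mulVec_inl _ _ _ IsRegularOfDegree.top, Sum.elim_inl,
        Fintype.card_fin, Fintype.card_fin, Nat.cast_sub hs, Nat.cast_one]
      calc _ = b₁ * 2 := by rw [hb₁]; ring
        _ ≤ _ := by gcongr; exact le_max_left _ _
    · rw [gjoin_aAlphaMatrix_mulVec_inr _ _ _ IsRegularOfDegree.bot, Sum.elim_inr,
        Fintype.card_fin]
      calc _ = b₂ * 1 := by ring
        _ ≤ _ := by gcongr; exact le_max_right _ _
  calc rhoAlpha α _ ≤ max b₁ b₂ :=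
        sSup_spectrum_le_of_mulVec_le (aAlphaMatrix_nonneg _ hα0 hα1.le)
          (by rintro (v | w) <;> norm_num) hrow
    _ < s + m - 3 := max_lt (by rw [hb₁]; linear_combination hclique / 2) hindep
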